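/- arXiv:2310.16701 — 3 statements merged into one kernel-verified Lean document; each statement's English description precedes it below -/
import Mathlib

section
/- Let F be a 3-uniform minimal odd-sunflower (every member of F has exactly 3 elements) such that no single element belongs to all members of F. Then every element of the union of F that belongs to at least two members of F belongs to exactly three members of F. -/
variable {α : Type*}

/-- A family of at least two nonempty finite sets is an *odd-sunflower* if every element of
the union of its members is contained in an odd number of its members. -/
def IsOddSunflower [DecidableEq α] (F : Finset (Finset α)) : Prop :=
  2 ≤ F.card ∧ (∀ S ∈ F, S.Nonempty) ∧
    ∀ x ∈ F.sup id, Odd (F.filter (fun S => x ∈ S)).card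

/-- A family is *odd-sunflower-free* if no subfamily of it (necessarily with at least two
members) is an odd-sunflower. -/
def OddSunflowerFree [DecidableEq α] (F : Finset (Finset α)) : Prop :=
  ∀ H ⊆ F, ¬ IsOddSunflower H

/-- A nonempty family of nonempty finite sets is an *even-sunflower* if every element of
the union of its members is contained in an even number of its members. -/
def IsEvenSunflower [DecidableEq α] (F : Finset (Finset α)) : Prop :=
  F.Nonempty ∧ (∀ S ∈ F, S.Nonempty) ∧
    ∀ x ∈ F.sup id, Even (F.filter (fun S => x ∈ S)).card

/-- A family is *even-sunflower-free* if no nonempty subfamily of it is an even-sunflower. -/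
def EvenSunflowerFree [DecidableEq α] (F : Finset (Finset α)) : Prop :=
  ∀ H ⊆ F, ¬ IsEvenSunflower H

/-- A family of at least three sets is a *sunflower* if every element is contained either
in all of the sets or in at most one of them. -/
def IsSunflower [DecidableEq α] (H : Finset (Finset α)) : Prop :=
  3 ≤ H.card ∧ ∀ x : α, (∀ S ∈ H, x ∈ S) ∨ (H.filter (fun S => x ∈ S)).card ≤ 1

/-- A family of sets is an *antichain* if none of its members is a proper subset of another. -/
def IsAntichainFamily (F : Finset (Finset α)) : Prop :=
  ∀ S ∈ F, ∀ T ∈ F, S ⊆ T → S = T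

/-- An odd-sunflower is *minimal* if no proper subfamily of it is an odd-sunflower. -/
def IsMinimalOddSunflower [DecidableEq α] (F : Finset (Finset α)) : Prop :=
  IsOddSunflower F ∧ ∀ H ⊂ F, ¬ IsOddSunflower H

/-- `Cfam n` is the family of all `(n-1)`-element subsets of `{1, …, n}`. -/
def Cfam (n : ℕ) : Finset (Finset ℕ) := (Finset.Icc 1 n).powersetCard (n - 1)

/-- `CfamPlus n` is `Cfam n` together with the full set `{1, …, n}`. -/
def CfamPlus (n : ℕ) : Finset (Finset ℕ) := insert (Finset.Icc 1 n) (Cfam n)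

/-- A multifamily (multiset) of at least two nonempty finite sets is an *odd-sunflower* if
every element of the union of its members has odd degree (counted with multiplicity). -/
def MultiOddSunflower [DecidableEq α] (H : Multiset (Finset α)) : Prop :=
  2 ≤ Multiset.card H ∧ (∀ S ∈ H, S.Nonempty) ∧
    ∀ x ∈ H.sup, Odd (H.countP (fun S => x ∈ S))

/-- The wreath product of two families. -/
def Wreath {β : Type*} [DecidableEq α] [DecidableEq β]
    (F : Set (Finset α)) (G : Set (Finset β)) : Set (Finset (α × β)) :=
  {S | ∃ F₀ ∈ F, ∃ g : α → Finset β, (∀ i ∈ F₀, g i ∈ G) ∧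
    S = F₀.biUnion (fun i => ({i} : Finset α) ×ˢ g i)}

/-- Odd-sunflower-freeness for set-indexed families. -/
def OddSunflowerFreeS [DecidableEq α] (F : Set (Finset α)) : Prop :=
  ∀ H : Finset (Finset α), ↑H ⊆ F → ¬ IsOddSunflower H

/-- Antichain condition for set-indexed families. -/
def IsAntichainFamilyS (F : Set (Finset α)) : Prop :=
  ∀ S ∈ F, ∀ T ∈ F, S ⊆ T → S = T

lemma card_filter_pair [DecidableEq α] (p : Finset α → Prop) [DecidablePred p]
    {S T : Finset α} (h : S ≠ T) :
    ((({S, T} : Finset (Finset α))).filter p).card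
      = (if p S then 1 else 0) + (if p T then 1 else 0) := by
  rw [Finset.filter_insert, Finset.filter_singleton]
  split_ifs <;> simp [Finset.card_insert_of_notMem, h]

lemma card_filter_triple [DecidableEq α] (p : Finset α → Prop) [DecidablePred p]
    {S1 S2 S3 : Finset α} (h12 : S1 ≠ S2) (h13 : S1 ≠ S3) (h23 : S2 ≠ S3) :
    ((({S1, S2, S3} : Finset (Finset α))).filter p).card
      = (if p S1 then 1 else 0) + (if p S2 then 1 else 0) + (if p S3 then 1 else 0) := by
  rw [Finset.filter_insert, Finset.filter_insert, Finset.filter_singleton]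
  split_ifs <;>
    simp [Finset.card_insert_of_notMem, Finset.mem_insert, Finset.mem_singleton, h12, h13, h23]

/-- Builder: a pair of disjoint members would be an odd sunflower. -/
lemma pair_intersects [DecidableEq α] {F : Finset (Finset α)}
    (hmin : ∀ H ⊂ F, ¬ IsOddSunflower H) (hne : ∀ S ∈ F, S.Nonempty) (hF : 4 ≤ F.card)
    {S T : Finset α} (hS : S ∈ F) (hT : T ∈ F) (hST : S ≠ T) :
    ∃ y, y ∈ S ∧ y ∈ T := by
  by_contra hdisj
  push_neg at hdisj
  have hsub : ({S, T} : Finset (Finset α)) ⊆ F := by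
    intro U hU; rcases Finset.mem_insert.mp hU with rfl | hU
    · exact hS
    · rw [Finset.mem_singleton] at hU; subst hU; exact hT
  have hss : ({S, T} : Finset (Finset α)) ⊂ F := by
    refine Finset.ssubset_iff_subset_ne.mpr ⟨hsub, fun hEq => ?_⟩
    have : ({S, T} : Finset (Finset α)).card = 2 := Finset.card_pair hST
    rw [hEq] at this; omega
  refine hmin _ hss ⟨?_, fun U hU => hne U (hsub hU), fun y hy => ?_⟩
  · rw [Finset.card_pair hST]
  · rw [card_filter_pair _ hST]
    simp only [Finset.mem_sup, id] at hy
    obtain ⟨U, hU, hyU⟩ := hy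
    rcases Finset.mem_insert.mp hU with rfl | hU
    · rw [if_pos hyU, if_neg (fun hyT => hdisj y hyU hyT)]; decide
    · rw [Finset.mem_singleton] at hU; subst hU
      rw [if_neg (fun hyS => hdisj y hyS hyU), if_pos hyU]; decide

/-- Builder: a triple of members in which every element of the union has odd degree
would be an odd sunflower. -/
lemma triple_not_osf [DecidableEq α] {F : Finset (Finset α)}
    (hmin : ∀ H ⊂ F, ¬ IsOddSunflower H) (hne : ∀ S ∈ F, S.Nonempty) (hF : 4 ≤ F.card)
    {S1 S2 S3 : Finset α} (hS1 : S1 ∈ F) (hS2 : S2 ∈ F) (hS3 : S3 ∈ F)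
    (h12 : S1 ≠ S2) (h13 : S1 ≠ S3) (h23 : S2 ≠ S3)
    (hodd : ∀ y, y ∈ S1 ∨ y ∈ S2 ∨ y ∈ S3 →
      Odd ((if y ∈ S1 then 1 else 0) + (if y ∈ S2 then 1 else 0) + (if y ∈ S3 then 1 else 0))) :
    False := by
  have hsub : ({S1, S2, S3} : Finset (Finset α)) ⊆ F := by
    intro U hU
    rcases Finset.mem_insert.mp hU with rfl | hU
    · exact hS1
    rcases Finset.mem_insert.mp hU with rfl | hU
    · exact hS2
    rw [Finset.mem_singleton] at hU; subst hU; exact hS3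
  have hcard : ({S1, S2, S3} : Finset (Finset α)).card = 3 := by
    rw [Finset.card_insert_of_notMem, Finset.card_pair h23]
    simp [h12, h13]
  have hss : ({S1, S2, S3} : Finset (Finset α)) ⊂ F := by
    refine Finset.ssubset_iff_subset_ne.mpr ⟨hsub, fun hEq => ?_⟩
    rw [hEq] at hcard; omega
  refine hmin _ hss ⟨by omega, fun U hU => hne U (hsub hU), fun y hy => ?_⟩
  · rw [card_filter_triple _ h12 h13 h23]
    apply hodd
    simp only [Finset.mem_sup, id] at hy
    obtain ⟨U, hU, hyU⟩ := hy
    rcases Finset.mem_insert.mp hU with rfl | hU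
    · exact Or.inl hyU
    rcases Finset.mem_insert.mp hU with rfl | hU
    · exact Or.inr (Or.inl hyU)
    rw [Finset.mem_singleton] at hU; subst hU; exact Or.inr (Or.inr hyU)

/-- Lemma 8: in a 3-uniform minimal odd-sunflower in which no element is contained in all
members, every element contained in at least two members is contained in exactly three. -/
theorem threeMOS_degree {α : Type*} [DecidableEq α]
    (F : Finset (Finset α)) (h : IsMinimalOddSunflower F)
    (h3 : ∀ S ∈ F, S.card = 3) (hnc : ¬ ∃ x : α, ∀ S ∈ F, x ∈ S) :
    ∀ x ∈ F.sup id, 2 ≤ (F.filter (fun S => x ∈ S)).card →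
      (F.filter (fun S => x ∈ S)).card = 3 := by
  obtain ⟨⟨hF2, hFne, hFodd⟩, hmin⟩ := h
  intro x hxU hx2
  by_contra hne3
  have hdodd := hFodd x hxU
  set A : Finset (Finset α) := F.filter (fun S => x ∈ S) with hAdef
  have hd5 : 5 ≤ A.card := by rcases hdodd with ⟨k, hk⟩; omega
  set B : Finset (Finset α) := F.filter (fun S => x ∉ S) with hBdef
  have hAB : A.card + B.card = F.card :=
    Finset.card_filter_add_card_filter_not (fun S => x ∈ S)
  have hBne : B.Nonempty := by
    by_contra h'
    rw [Finset.not_nonempty_iff_eq_empty, Finset.filter_eq_empty_iff] at h'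
    exact hnc ⟨x, fun S hS => not_not.mp (h' hS)⟩
  have hF6 : 6 ≤ F.card := by have := Finset.card_pos.mpr hBne; omega
  have hAmem : ∀ S ∈ A, S ∈ F ∧ x ∈ S := fun S hS =>
    ⟨Finset.mem_of_mem_filter _ hS, (Finset.mem_filter.mp hS).2⟩
  have hBmem : ∀ T ∈ B, T ∈ F ∧ x ∉ T := fun T hT =>
    ⟨Finset.mem_of_mem_filter _ hT, (Finset.mem_filter.mp hT).2⟩
  have hins : ∀ S ∈ A, insert x (S.erase x) = S := fun S hS =>
    Finset.insert_erase (hAmem S hS).2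
  have hpaircard : ∀ S ∈ A, (S.erase x).card = 2 := fun S hS => by
    rw [Finset.card_erase_of_mem (hAmem S hS).2, h3 S (hAmem S hS).1]
  -- M1 : any two members intersect
  have hint : ∀ S ∈ F, ∀ T ∈ F, S ≠ T → ∃ y, y ∈ S ∧ y ∈ T :=
    fun S hS T hT hST => pair_intersects hmin hFne (by omega) hS hT hST
  -- M2 : no element other than x lies in three members of A
  have hM2 : ∀ v, v ≠ x → ∀ S1 ∈ A, ∀ S2 ∈ A, ∀ S3 ∈ A,
      S1 ≠ S2 → S1 ≠ S3 → S2 ≠ S3 → v ∈ S1 → v ∈ S2 → v ∈ S3 → False := by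
    intro v hvx S1 hS1 S2 hS2 S3 hS3 h12 h13 h23 hv1 hv2 hv3
    have key : ∀ U, U ∈ A → v ∈ U → ∀ y, y ≠ x → y ≠ v → y ∈ U → U = {x, v, y} := by
      intro U hU hvU y hyx hyv hyU
      have hsub : ({x, v, y} : Finset α) ⊆ U := by
        intro z hz
        rcases Finset.mem_insert.mp hz with rfl | hz
        · exact (hAmem U hU).2
        rcases Finset.mem_insert.mp hz with rfl | hz
        · exact hvU
        · rw [Finset.mem_singleton] at hz; subst hz; exact hyU
      have hc : ({x, v, y} : Finset α).card = 3 := by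
        rw [Finset.card_insert_of_notMem (by simp [hvx.symm, hyx.symm, Ne.symm]),
          Finset.card_pair (Ne.symm hyv)]
      exact (Finset.eq_of_subset_of_card_le hsub (by rw [h3 U (hAmem U hU).1, hc])).symm
    apply triple_not_osf hmin hFne (by omega) (hAmem S1 hS1).1 (hAmem S2 hS2).1
      (hAmem S3 hS3).1 h12 h13 h23
    intro y hy
    by_cases hyx : y = x
    · subst hyx
      simp [(hAmem S1 hS1).2, (hAmem S2 hS2).2, (hAmem S3 hS3).2]
      decide
    by_cases hyv : y = v
    · subst hyv; simp [hv1, hv2, hv3]; decide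
    have huniq : ∀ U V, U ∈ A → V ∈ A → v ∈ U → v ∈ V → y ∈ U → y ∈ V → U = V := by
      intro U V hU hV hvU hvV hyU hyV
      rw [key U hU hvU y hyx hyv hyU, key V hV hvV y hyx hyv hyV]
    rcases hy with hy1 | hy2 | hy3
    · rw [if_pos hy1, if_neg (fun hy2 => h12 (huniq _ _ hS1 hS2 hv1 hv2 hy1 hy2)),
        if_neg (fun hy3 => h13 (huniq _ _ hS1 hS3 hv1 hv3 hy1 hy3))]; decide
    · rw [if_neg (fun hy1 => h12 (huniq _ _ hS1 hS2 hv1 hv2 hy1 hy2)), if_pos hy2,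
        if_neg (fun hy3 => h23 (huniq _ _ hS2 hS3 hv2 hv3 hy2 hy3))]; decide
    · rw [if_neg (fun hy1 => h13 (huniq _ _ hS1 hS3 hv1 hv3 hy1 hy3)),
        if_neg (fun hy2 => h23 (huniq _ _ hS2 hS3 hv2 hv3 hy2 hy3)), if_pos hy3]; decide
  -- link degree at most 2
  have hl2 : ∀ v, v ≠ x → (A.filter (fun S => v ∈ S)).card ≤ 2 := by
    intro v hv
    by_contra hgt
    push_neg at hgt
    obtain ⟨S1, h1, S2, h2, S3, h3', h12, h13, h23⟩ := Finset.two_lt_card.mp hgt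
    exact hM2 v hv S1 (Finset.mem_of_mem_filter _ h1) S2 (Finset.mem_of_mem_filter _ h2)
      S3 (Finset.mem_of_mem_filter _ h3') h12 h13 h23
      (Finset.mem_filter.mp h1).2 (Finset.mem_filter.mp h2).2 (Finset.mem_filter.mp h3').2
  -- M3 : no three members of A meeting pairwise only in x
  have hM3 : ∀ S1 ∈ A, ∀ S2 ∈ A, ∀ S3 ∈ A, S1 ≠ S2 → S1 ≠ S3 → S2 ≠ S3 →
      (∀ y, y ∈ S1 → y ∈ S2 → y = x) → (∀ y, y ∈ S1 → y ∈ S3 → y = x) →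
      (∀ y, y ∈ S2 → y ∈ S3 → y = x) → False := by
    intro S1 hS1 S2 hS2 S3 hS3 h12 h13 h23 hi12 hi13 hi23
    apply triple_not_osf hmin hFne (by omega) (hAmem S1 hS1).1 (hAmem S2 hS2).1
      (hAmem S3 hS3).1 h12 h13 h23
    intro y hy
    by_cases hyx : y = x
    · subst hyx
      simp [(hAmem S1 hS1).2, (hAmem S2 hS2).2, (hAmem S3 hS3).2]
      decide
    rcases hy with hy1 | hy2 | hy3
    · rw [if_pos hy1, if_neg (fun hy2 => hyx (hi12 y hy1 hy2)),
        if_neg (fun hy3 => hyx (hi13 y hy1 hy3))]; decide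
    · rw [if_neg (fun hy1 => hyx (hi12 y hy1 hy2)), if_pos hy2,
        if_neg (fun hy3 => hyx (hi23 y hy2 hy3))]; decide
    · rw [if_neg (fun hy1 => hyx (hi13 y hy1 hy3)),
        if_neg (fun hy2 => hyx (hi23 y hy2 hy3)), if_pos hy3]; decide
  -- degree splitting
  have hsplit : ∀ y, (F.filter (fun S => y ∈ S)).card
      = (A.filter (fun S => y ∈ S)).card + (B.filter (fun S => y ∈ S)).card := by
    intro y
    rw [hAdef, hBdef, Finset.filter_comm, Finset.filter_comm (fun S => x ∉ S)]
    exact (Finset.card_filter_add_card_filter_not (fun S => x ∈ S)).symm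
  by_cases hcase : ∃ v, v ≠ x ∧ (A.filter (fun S => v ∈ S)).card = 1
  · -- Case II : some element has link degree exactly 1
    obtain ⟨v1, hv1x, hv1deg⟩ := hcase
    obtain ⟨Sa, hSaEq⟩ := Finset.card_eq_one.mp hv1deg
    have hSaA : Sa ∈ A ∧ v1 ∈ Sa := by
      have : Sa ∈ A.filter (fun S => v1 ∈ S) := by
        rw [hSaEq]; exact Finset.mem_singleton_self Sa
      exact ⟨Finset.mem_of_mem_filter _ this, (Finset.mem_filter.mp this).2⟩
    have huniq1 : ∀ S ∈ A, v1 ∈ S → S = Sa := by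
      intro S hS hv
      have : S ∈ A.filter (fun S => v1 ∈ S) := Finset.mem_filter.mpr ⟨hS, hv⟩
      rw [hSaEq, Finset.mem_singleton] at this; exact this
    have hv1Pa : v1 ∈ Sa.erase x := Finset.mem_erase.mpr ⟨hv1x, hSaA.2⟩
    obtain ⟨v2, hv2v1, hPa⟩ : ∃ v2, v2 ≠ v1 ∧ Sa.erase x = {v1, v2} := by
      obtain ⟨u, v, huv, hEq⟩ := Finset.card_eq_two.mp (hpaircard Sa hSaA.1)
      rw [hEq, Finset.mem_insert, Finset.mem_singleton] at hv1Pa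
      rcases hv1Pa with rfl | rfl
      · exact ⟨v, huv.symm, hEq⟩
      · exact ⟨u, huv, by rw [hEq]; ext z; simp [or_comm]⟩
    have hv2x : v2 ≠ x := Finset.ne_of_mem_erase (by rw [hPa]; simp)
    have hv2Sa : v2 ∈ Sa := Finset.mem_of_mem_erase (by rw [hPa]; simp)
    set W := A.filter (fun S => v2 ∉ S) with hWdef
    have hWA : ∀ S ∈ W, S ∈ A ∧ v2 ∉ S := fun S hS =>
      ⟨Finset.mem_of_mem_filter _ hS, (Finset.mem_filter.mp hS).2⟩
    have hWv1 : ∀ S ∈ W, v1 ∉ S := by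
      intro S hS hv1S
      have hEq := huniq1 S (hWA S hS).1 hv1S
      exact (hWA S hS).2 (hEq ▸ hv2Sa)
    have hWcards : (A.filter (fun S => v2 ∈ S)).card + W.card = A.card := by
      rw [hWdef]
      exact Finset.card_filter_add_card_filter_not (fun S => v2 ∈ S)
    have hWcard3 : 3 ≤ W.card := by
      have hle2 := hl2 v2 hv2x
      omega
    have hmeet : ∀ S ∈ W, ∀ T ∈ W, S ≠ T → ∃ w, w ≠ x ∧ w ∈ S ∧ w ∈ T := by
      intro S hS T hT hST
      by_contra hno
      push_neg at hno
      have hSa_S : ∀ y ∈ Sa, y ∈ S → y = x := by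
        intro y hySa hyS
        by_contra hyx
        have hmem : y ∈ Sa.erase x := Finset.mem_erase.mpr ⟨hyx, hySa⟩
        rw [hPa] at hmem
        rcases Finset.mem_insert.mp hmem with rfl | hmem
        · exact hWv1 S hS hyS
        · rw [Finset.mem_singleton] at hmem; subst hmem; exact (hWA S hS).2 hyS
      have hSa_T : ∀ y ∈ Sa, y ∈ T → y = x := by
        intro y hySa hyT
        by_contra hyx
        have hmem : y ∈ Sa.erase x := Finset.mem_erase.mpr ⟨hyx, hySa⟩
        rw [hPa] at hmem
        rcases Finset.mem_insert.mp hmem with rfl | hmem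
        · exact hWv1 T hT hyT
        · rw [Finset.mem_singleton] at hmem; subst hmem; exact (hWA T hT).2 hyT
      have hS_T : ∀ y ∈ S, y ∈ T → y = x := by
        intro y hyS hyT
        by_contra hyx
        exact hno y hyx hyS hyT
      have hSSa : Sa ≠ S := fun hEq => (hWA S hS).2 (hEq ▸ hv2Sa)
      have hTSa : Sa ≠ T := fun hEq => (hWA T hT).2 (hEq ▸ hv2Sa)
      exact hM3 Sa hSaA.1 S (hWA S hS).1 T (hWA T hT).1 hSSa hTSa hST hSa_S hSa_T hS_T
    obtain ⟨S1, hS1, S2, hS2, S3, hS3, h12, h13, h23⟩ :=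
      Finset.two_lt_card.mp (by omega : 2 < W.card)
    obtain ⟨a, hax, haS1, haS2⟩ := hmeet S1 hS1 S2 hS2 h12
    obtain ⟨b, hbx, hbS1, hbS3⟩ := hmeet S1 hS1 S3 hS3 h13
    obtain ⟨c, hcx, hcS2, hcS3⟩ := hmeet S2 hS2 S3 hS3 h23
    have hab : a ≠ b := fun hEq => hM2 a hax S1 (hWA _ hS1).1 S2 (hWA _ hS2).1 S3
      (hWA _ hS3).1 h12 h13 h23 haS1 haS2 (hEq ▸ hbS3)
    have hac : a ≠ c := fun hEq => hM2 a hax S1 (hWA _ hS1).1 S2 (hWA _ hS2).1 S3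
      (hWA _ hS3).1 h12 h13 h23 haS1 haS2 (hEq ▸ hcS3)
    have hbc : b ≠ c := fun hEq => hM2 b hbx S1 (hWA _ hS1).1 S2 (hWA _ hS2).1 S3
      (hWA _ hS3).1 h12 h13 h23 hbS1 (hEq ▸ hcS2) hbS3
    have hpair_eq : ∀ S ∈ A, ∀ p q : α, p ≠ q → p ≠ x → q ≠ x → p ∈ S → q ∈ S →
        S.erase x = {p, q} := by
      intro S hS p q hpq hpx hqx hpS hqS
      have hsub : ({p, q} : Finset α) ⊆ S.erase x := by
        intro z hz
        rcases Finset.mem_insert.mp hz with rfl | hz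
        · exact Finset.mem_erase.mpr ⟨hpx, hpS⟩
        · rw [Finset.mem_singleton] at hz; subst hz
          exact Finset.mem_erase.mpr ⟨hqx, hqS⟩
      exact (Finset.eq_of_subset_of_card_le hsub
        (by rw [hpaircard S hS, Finset.card_pair hpq])).symm
    have hP1 : S1.erase x = {a, b} := hpair_eq S1 (hWA _ hS1).1 a b hab hax hbx haS1 hbS1
    have hP2 : S2.erase x = {a, c} := hpair_eq S2 (hWA _ hS2).1 a c hac hax hcx haS2 hcS2
    have hP3 : S3.erase x = {b, c} := hpair_eq S3 (hWA _ hS3).1 b c hbc hbx hcx hbS3 hcS3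
    have hWsub : W ⊆ {S1, S2, S3} := by
      intro S4 hS4
      by_contra hS4n
      simp only [Finset.mem_insert, Finset.mem_singleton] at hS4n
      push_neg at hS4n
      obtain ⟨hn1, hn2, hn3⟩ := hS4n
      obtain ⟨w1, hw1x, hw1S4, hw1S1⟩ := hmeet S4 hS4 S1 hS1 hn1
      obtain ⟨w2, hw2x, hw2S4, hw2S2⟩ := hmeet S4 hS4 S2 hS2 hn2
      obtain ⟨w3, hw3x, hw3S4, hw3S3⟩ := hmeet S4 hS4 S3 hS3 hn3
      have hw1m : w1 = a ∨ w1 = b := by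
        have : w1 ∈ S1.erase x := Finset.mem_erase.mpr ⟨hw1x, hw1S1⟩
        rw [hP1] at this; simpa using this
      have hw2m : w2 = a ∨ w2 = c := by
        have : w2 ∈ S2.erase x := Finset.mem_erase.mpr ⟨hw2x, hw2S2⟩
        rw [hP2] at this; simpa using this
      have hw3m : w3 = b ∨ w3 = c := by
        have : w3 ∈ S3.erase x := Finset.mem_erase.mpr ⟨hw3x, hw3S3⟩
        rw [hP3] at this; simpa using this
      have hforce : ∀ p q : α, p ≠ q → p ≠ x → q ≠ x → p ∈ S4 → q ∈ S4 →
          ∀ Si, Si ∈ A → Si.erase x = {p, q} → S4 = Si := by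
        intro p q hpq hpx hqx hpS4 hqS4 Si hSiA hSipair
        have h4 : S4.erase x = {p, q} := hpair_eq S4 (hWA _ hS4).1 p q hpq hpx hqx hpS4 hqS4
        rw [← hins S4 (hWA _ hS4).1, ← hins Si hSiA, h4, hSipair]
      rcases hw1m with rfl | rfl <;> rcases hw2m with rfl | rfl <;>
          rcases hw3m with rfl | rfl <;>
        first
        | exact hn1 (hforce _ _ hab hax hbx hw1S4 hw3S4 S1 (hWA _ hS1).1 hP1)
        | exact hn1 (hforce _ _ hab hax hbx hw2S4 hw1S4 S1 (hWA _ hS1).1 hP1)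
        | exact hn1 (hforce _ _ hab hax hbx hw1S4 hw2S4 S1 (hWA _ hS1).1 hP1)
        | exact hn1 (hforce _ _ hab hax hbx hw3S4 hw1S4 S1 (hWA _ hS1).1 hP1)
        | exact hn2 (hforce _ _ hac hax hcx hw1S4 hw3S4 S2 (hWA _ hS2).1 hP2)
        | exact hn2 (hforce _ _ hac hax hcx hw1S4 hw2S4 S2 (hWA _ hS2).1 hP2)
        | exact hn2 (hforce _ _ hac hax hcx hw2S4 hw1S4 S2 (hWA _ hS2).1 hP2)
        | exact hn2 (hforce _ _ hac hax hcx hw2S4 hw3S4 S2 (hWA _ hS2).1 hP2)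
        | exact hn3 (hforce _ _ hbc hbx hcx hw1S4 hw2S4 S3 (hWA _ hS3).1 hP3)
        | exact hn3 (hforce _ _ hbc hbx hcx hw2S4 hw1S4 S3 (hWA _ hS3).1 hP3)
        | exact hn3 (hforce _ _ hbc hbx hcx hw3S4 hw2S4 S3 (hWA _ hS3).1 hP3)
        | exact hn3 (hforce _ _ hbc hbx hcx hw2S4 hw3S4 S3 (hWA _ hS3).1 hP3)
        | exact hn3 (hforce _ _ hbc hbx hcx hw1S4 hw3S4 S3 (hWA _ hS3).1 hP3)
        | exact hn3 (hforce _ _ hbc hbx hcx hw3S4 hw1S4 S3 (hWA _ hS3).1 hP3)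
    have hWcard : W.card = 3 := by
      have hle : W.card ≤ ({S1, S2, S3} : Finset (Finset α)).card :=
        Finset.card_le_card hWsub
      have : ({S1, S2, S3} : Finset (Finset α)).card = 3 := by
        rw [Finset.card_insert_of_notMem (by simp [h12, h13]), Finset.card_pair h23]
      omega
    have hAv2 : (A.filter (fun S => v2 ∈ S)).card = 2 := by
      have hle2 := hl2 v2 hv2x
      omega
    have hA5 : A.card = 5 := by omega
    obtain ⟨Sb, hSbSa, hfilterv2⟩ : ∃ Sb, Sb ≠ Sa ∧
        A.filter (fun S => v2 ∈ S) = {Sa, Sb} := by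
      obtain ⟨u, v, huv, hEq⟩ := Finset.card_eq_two.mp hAv2
      have hSam : Sa ∈ A.filter (fun S => v2 ∈ S) := Finset.mem_filter.mpr ⟨hSaA.1, hv2Sa⟩
      rw [hEq, Finset.mem_insert, Finset.mem_singleton] at hSam
      rcases hSam with rfl | rfl
      · exact ⟨v, huv.symm, hEq⟩
      · exact ⟨u, huv, by rw [hEq]; ext z; simp [or_comm]⟩
    have hSbA : Sb ∈ A ∧ v2 ∈ Sb := by
      have : Sb ∈ A.filter (fun S => v2 ∈ S) := by rw [hfilterv2]; simp
      exact ⟨Finset.mem_of_mem_filter _ this, (Finset.mem_filter.mp this).2⟩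
    have huniq2 : ∀ S ∈ A, v2 ∈ S → S = Sa ∨ S = Sb := by
      intro S hS hv
      have : S ∈ A.filter (fun S => v2 ∈ S) := Finset.mem_filter.mpr ⟨hS, hv⟩
      rw [hfilterv2] at this; simpa using this
    have hv2Pb : v2 ∈ Sb.erase x := Finset.mem_erase.mpr ⟨hv2x, hSbA.2⟩
    obtain ⟨v3, hv3v2, hPb⟩ : ∃ v3, v3 ≠ v2 ∧ Sb.erase x = {v2, v3} := by
      obtain ⟨u, v, huv, hEq⟩ := Finset.card_eq_two.mp (hpaircard Sb hSbA.1)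
      rw [hEq, Finset.mem_insert, Finset.mem_singleton] at hv2Pb
      rcases hv2Pb with rfl | rfl
      · exact ⟨v, huv.symm, hEq⟩
      · exact ⟨u, huv, by rw [hEq]; ext z; simp [or_comm]⟩
    have hv3x : v3 ≠ x := Finset.ne_of_mem_erase (show v3 ∈ Sb.erase x by rw [hPb]; simp)
    have hv3Sb : v3 ∈ Sb := Finset.mem_of_mem_erase (show v3 ∈ Sb.erase x by rw [hPb]; simp)
    have hv3v1 : v3 ≠ v1 := fun hEq => hSbSa (huniq1 Sb hSbA.1 (hEq ▸ hv3Sb))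

    -- a, b, c are distinct from v1 and v2
    have hav1 : a ≠ v1 := fun hEq => hWv1 S1 hS1 (hEq ▸ haS1)
    have hbv1 : b ≠ v1 := fun hEq => hWv1 S1 hS1 (hEq ▸ hbS1)
    have hcv1 : c ≠ v1 := fun hEq => hWv1 S2 hS2 (hEq ▸ hcS2)
    have hav2 : a ≠ v2 := fun hEq => (hWA S1 hS1).2 (hEq ▸ haS1)
    have hbv2 : b ≠ v2 := fun hEq => (hWA S1 hS1).2 (hEq ▸ hbS1)
    have hcv2 : c ≠ v2 := fun hEq => (hWA S2 hS2).2 (hEq ▸ hcS2)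
    -- v3 is distinct from a, b, c
    have hS1Sb : S1 ≠ Sb := fun hEq => (hWA S1 hS1).2 (hEq ▸ hSbA.2)
    have hS2Sb : S2 ≠ Sb := fun hEq => (hWA S2 hS2).2 (hEq ▸ hSbA.2)
    have hS3Sb : S3 ≠ Sb := fun hEq => (hWA S3 hS3).2 (hEq ▸ hSbA.2)
    have hv3a : v3 ≠ a := fun hEq => hM2 a hax S1 (hWA _ hS1).1 S2 (hWA _ hS2).1 Sb
      hSbA.1 h12 hS1Sb hS2Sb haS1 haS2 (hEq ▸ hv3Sb)
    have hv3b : v3 ≠ b := fun hEq => hM2 b hbx S1 (hWA _ hS1).1 S3 (hWA _ hS3).1 Sb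
      hSbA.1 h13 hS1Sb hS3Sb hbS1 hbS3 (hEq ▸ hv3Sb)
    have hv3c : v3 ≠ c := fun hEq => hM2 c hcx S2 (hWA _ hS2).1 S3 (hWA _ hS3).1 Sb
      hSbA.1 h23 hS2Sb hS3Sb hcS2 hcS3 (hEq ▸ hv3Sb)
    -- every member of B meets each triangle pair
    have hzmem : ∀ T ∈ B, ∃ z1 z2 z3, (z1 = a ∨ z1 = b) ∧ (z2 = a ∨ z2 = c) ∧
        (z3 = b ∨ z3 = c) ∧ z1 ∈ T ∧ z2 ∈ T ∧ z3 ∈ T := by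
      intro T hT
      have hTx := (hBmem T hT).2
      have get : ∀ S ∈ W, ∀ p q : α, S.erase x = {p, q} →
          ∃ z, (z = p ∨ z = q) ∧ z ∈ T := by
        intro S hSW p q hpairpq
        have hST : S ≠ T := fun hEq => hTx (hEq ▸ (hAmem S (hWA S hSW).1).2)
        obtain ⟨z, hzS, hzT⟩ := hint S (hAmem S (hWA S hSW).1).1 T (hBmem T hT).1 hST
        have hzx : z ≠ x := fun hEq => hTx (hEq ▸ hzT)
        have hz : z ∈ S.erase x := Finset.mem_erase.mpr ⟨hzx, hzS⟩
        rw [hpairpq] at hz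
        exact ⟨z, by simpa using hz, hzT⟩
      obtain ⟨z1, hz1, hz1T⟩ := get S1 hS1 a b hP1
      obtain ⟨z2, hz2, hz2T⟩ := get S2 hS2 a c hP2
      obtain ⟨z3, hz3, hz3T⟩ := get S3 hS3 b c hP3
      exact ⟨z1, z2, z3, hz1, hz2, hz3, hz1T, hz2T, hz3T⟩
    -- no member of B contains two elements outside the triangle
    have hkill : ∀ T ∈ B, ∀ p q : α, p ∈ T → q ∈ T → p ≠ q →
        p ≠ a → p ≠ b → p ≠ c → q ≠ a → q ≠ b → q ≠ c → False := by
      intro T hT p q hpT hqT hpq hpa hpb hpc hqa hqb hqc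
      obtain ⟨z1, z2, z3, hz1, hz2, hz3, hz1T, hz2T, hz3T⟩ := hzmem T hT
      have hz1p : z1 ≠ p := by
        rcases hz1 with rfl | rfl
        · exact fun h => hpa h.symm
        · exact fun h => hpb h.symm
      have hz1q : z1 ≠ q := by
        rcases hz1 with rfl | rfl
        · exact fun h => hqa h.symm
        · exact fun h => hqb h.symm
      have hsub : ({p, q, z1} : Finset α) ⊆ T := by
        intro z hz
        rcases Finset.mem_insert.mp hz with rfl | hz
        · exact hpT
        rcases Finset.mem_insert.mp hz with rfl | hz
        · exact hqT
        · rw [Finset.mem_singleton] at hz; subst hz; exact hz1T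
      have hcard3 : ({p, q, z1} : Finset α).card = 3 := by
        rw [Finset.card_insert_of_notMem (by simp [hpq, hz1p.symm]),
          Finset.card_pair (Ne.symm hz1q)]
      have hTeq : T = {p, q, z1} :=
        (Finset.eq_of_subset_of_card_le hsub (by rw [h3 T (hBmem T hT).1, hcard3])).symm
      have hz2eq : z2 = z1 := by
        have hz2T' : z2 ∈ ({p, q, z1} : Finset α) := hTeq ▸ hz2T
        rcases Finset.mem_insert.mp hz2T' with rfl | hz2T'
        · rcases hz2 with h | h
          · exact absurd h hpa
          · exact absurd h hpc
        rcases Finset.mem_insert.mp hz2T' with rfl | hz2T'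
        · rcases hz2 with h | h
          · exact absurd h hqa
          · exact absurd h hqc
        · rwa [Finset.mem_singleton] at hz2T'
      have hz3eq : z3 = z1 := by
        have hz3T' : z3 ∈ ({p, q, z1} : Finset α) := hTeq ▸ hz3T
        rcases Finset.mem_insert.mp hz3T' with rfl | hz3T'
        · rcases hz3 with h | h
          · exact absurd h hpb
          · exact absurd h hpc
        rcases Finset.mem_insert.mp hz3T' with rfl | hz3T'
        · rcases hz3 with h | h
          · exact absurd h hqb
          · exact absurd h hqc
        · rwa [Finset.mem_singleton] at hz3T'
      rw [hz2eq] at hz2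
      rw [hz3eq] at hz3
      rcases hz1 with h1 | h1 <;> rcases hz2 with h2 | h2 <;> rcases hz3 with h3' | h3' <;>
        first
        | exact hab (h1.symm.trans h3')
        | exact hac (h1.symm.trans h3')
        | exact hab (h2.symm.trans h1)
        | exact hbc (h1.symm.trans h2)
    -- every member of B contains v2
    have hBv2 : ∀ T ∈ B, v2 ∈ T := by
      intro T hT
      by_contra hv2T
      have hTx := (hBmem T hT).2
      have hv1T : v1 ∈ T := by
        have hST : Sa ≠ T := fun hEq => hTx (hEq ▸ (hAmem Sa hSaA.1).2)
        obtain ⟨y1, hy1Sa, hy1T⟩ := hint Sa (hAmem Sa hSaA.1).1 T (hBmem T hT).1 hST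
        have hy1x : y1 ≠ x := fun hEq => hTx (hEq ▸ hy1T)
        have hy1m : y1 ∈ Sa.erase x := Finset.mem_erase.mpr ⟨hy1x, hy1Sa⟩
        rw [hPa] at hy1m
        rcases Finset.mem_insert.mp hy1m with rfl | hy1m
        · exact hy1T
        · rw [Finset.mem_singleton] at hy1m; subst hy1m; exact absurd hy1T hv2T
      have hv3T : v3 ∈ T := by
        have hST : Sb ≠ T := fun hEq => hTx (hEq ▸ (hAmem Sb hSbA.1).2)
        obtain ⟨y1, hy1Sb, hy1T⟩ := hint Sb (hAmem Sb hSbA.1).1 T (hBmem T hT).1 hST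
        have hy1x : y1 ≠ x := fun hEq => hTx (hEq ▸ hy1T)
        have hy1m : y1 ∈ Sb.erase x := Finset.mem_erase.mpr ⟨hy1x, hy1Sb⟩
        rw [hPb] at hy1m
        rcases Finset.mem_insert.mp hy1m with rfl | hy1m
        · exact absurd hy1T hv2T
        · rw [Finset.mem_singleton] at hy1m; subst hy1m; exact hy1T
      exact hkill T hT v1 v3 hv1T hv3T (Ne.symm hv3v1) (Ne.symm hav1) (Ne.symm hbv1)
        (Ne.symm hcv1) hv3a hv3b hv3c
    -- no member of B contains v1 or v3
    have hBv1 : ∀ T ∈ B, v1 ∉ T := fun T hT hv1T =>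
      hkill T hT v1 v2 hv1T (hBv2 T hT) (Ne.symm hv2v1) (Ne.symm hav1) (Ne.symm hbv1)
        (Ne.symm hcv1) (Ne.symm hav2) (Ne.symm hbv2) (Ne.symm hcv2)
    have hBv3 : ∀ T ∈ B, v3 ∉ T := fun T hT hv3T =>
      hkill T hT v3 v2 hv3T (hBv2 T hT) hv3v2 hv3a hv3b hv3c (Ne.symm hav2)
        (Ne.symm hbv2) (Ne.symm hcv2)
    -- v1 and v3 have global degree 1
    have hAorB : ∀ S ∈ F, S ∈ A ∨ S ∈ B := by
      intro S hS
      by_cases hxS : x ∈ S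
      · exact Or.inl (Finset.mem_filter.mpr ⟨hS, hxS⟩)
      · exact Or.inr (Finset.mem_filter.mpr ⟨hS, hxS⟩)
    have hdv1 : F.filter (fun S => v1 ∈ S) = {Sa} := by
      ext S
      simp only [Finset.mem_filter, Finset.mem_singleton]
      constructor
      · rintro ⟨hSF, hv1S⟩
        rcases hAorB S hSF with hSA | hSB
        · exact huniq1 S hSA hv1S
        · exact absurd hv1S (hBv1 S hSB)
      · intro hEqS
        rw [hEqS]
        exact ⟨(hAmem Sa hSaA.1).1, hSaA.2⟩
    have hdv3 : F.filter (fun S => v3 ∈ S) = {Sb} := by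
      ext S
      simp only [Finset.mem_filter, Finset.mem_singleton]
      constructor
      · rintro ⟨hSF, hv3S⟩
        rcases hAorB S hSF with hSA | hSB
        · by_cases hv2S : v2 ∈ S
          · rcases huniq2 S hSA hv2S with hEqS | hEqS
            · exfalso
              rw [hEqS] at hv3S
              have : v3 ∈ Sa.erase x := Finset.mem_erase.mpr ⟨hv3x, hv3S⟩
              rw [hPa] at this
              rcases Finset.mem_insert.mp this with hv | hv
              · exact hv3v1 hv
              · rw [Finset.mem_singleton] at hv; exact hv3v2 hv
            · exact hEqS
          · exfalso
            have hSW : S ∈ W := Finset.mem_filter.mpr ⟨hSA, hv2S⟩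
            have hv3p : v3 ∈ S.erase x := Finset.mem_erase.mpr ⟨hv3x, hv3S⟩
            have hSin := hWsub hSW
            rcases Finset.mem_insert.mp hSin with rfl | hSin
            · rw [hP1] at hv3p
              rcases Finset.mem_insert.mp hv3p with hv | hv
              · exact hv3a hv
              · rw [Finset.mem_singleton] at hv; exact hv3b hv
            rcases Finset.mem_insert.mp hSin with rfl | hSin
            · rw [hP2] at hv3p
              rcases Finset.mem_insert.mp hv3p with hv | hv
              · exact hv3a hv
              · rw [Finset.mem_singleton] at hv; exact hv3c hv
            · rw [Finset.mem_singleton] at hSin; subst hSin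
              rw [hP3] at hv3p
              rcases Finset.mem_insert.mp hv3p with hv | hv
              · exact hv3b hv
              · rw [Finset.mem_singleton] at hv; exact hv3c hv
        · exact absurd hv3S (hBv3 S hSB)
      · intro hEqS
        rw [hEqS]
        exact ⟨(hAmem Sb hSbA.1).1, hv3Sb⟩
    -- the final proper subfamily
    have hSaF : Sa ∈ F := (hAmem Sa hSaA.1).1
    have hSbF : Sb ∈ F := (hAmem Sb hSbA.1).1
    set H : Finset (Finset α) := (F.erase Sa).erase Sb with hHdef
    have hHsubF : H ⊆ F := fun U hU =>
      Finset.mem_of_mem_erase (Finset.mem_of_mem_erase hU)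
    have hHss : H ⊂ F :=
      Finset.ssubset_of_subset_of_ssubset (Finset.erase_subset _ _)
        (Finset.erase_ssubset hSaF)
    have hSbmem : Sb ∈ F.erase Sa := Finset.mem_erase.mpr ⟨hSbSa, hSbF⟩
    have hHcard : H.card = F.card - 2 := by
      rw [hHdef, Finset.card_erase_of_mem hSbmem, Finset.card_erase_of_mem hSaF]
      omega
    refine hmin H hHss ⟨by omega, fun U hU => hFne U (hHsubF hU), fun y hy => ?_⟩
    obtain ⟨U, hUH, hyU⟩ := Finset.mem_sup.mp hy
    simp only [id] at hyU
    have hUF : U ∈ F := hHsubF hUH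
    have hUSa : U ≠ Sa := Finset.ne_of_mem_erase (Finset.mem_of_mem_erase hUH)
    have hUSb : U ≠ Sb := Finset.ne_of_mem_erase hUH
    have hHfilter : ∀ q : α, H.filter (fun S => q ∈ S)
        = ((F.filter (fun S => q ∈ S)).erase Sa).erase Sb := by
      intro q
      rw [hHdef, Finset.filter_erase, Finset.filter_erase]
    by_cases hyv1 : y = v1
    · exfalso
      subst hyv1
      have : U ∈ F.filter (fun S => y ∈ S) := Finset.mem_filter.mpr ⟨hUF, hyU⟩
      rw [hdv1, Finset.mem_singleton] at this
      exact hUSa this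
    by_cases hyv3 : y = v3
    · exfalso
      subst hyv3
      have : U ∈ F.filter (fun S => y ∈ S) := Finset.mem_filter.mpr ⟨hUF, hyU⟩
      rw [hdv3, Finset.mem_singleton] at this
      exact hUSb this
    by_cases hyx' : y = x
    · subst hyx'
      rw [hHfilter, ← hAdef]
      have hSbmemA : Sb ∈ A.erase Sa := Finset.mem_erase.mpr ⟨hSbSa, hSbA.1⟩
      rw [Finset.card_erase_of_mem hSbmemA, Finset.card_erase_of_mem hSaA.1, hA5]
      decide
    by_cases hyv2 : y = v2
    · subst hyv2
      have hodd2 := hFodd y (Finset.mem_sup.mpr ⟨Sa, hSaF, hv2Sa⟩)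
      have hSamem2 : Sa ∈ F.filter (fun S => y ∈ S) := Finset.mem_filter.mpr ⟨hSaF, hv2Sa⟩
      have hSbmem2 : Sb ∈ (F.filter (fun S => y ∈ S)).erase Sa :=
        Finset.mem_erase.mpr ⟨hSbSa, Finset.mem_filter.mpr ⟨hSbF, hSbA.2⟩⟩
      rw [hHfilter, Finset.card_erase_of_mem hSbmem2, Finset.card_erase_of_mem hSamem2]
      have h2le : 2 ≤ (F.filter (fun S => y ∈ S)).card := by
        have : ({Sb, Sa} : Finset (Finset α)) ⊆ F.filter (fun S => y ∈ S) := by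
          intro z hz
          rcases Finset.mem_insert.mp hz with rfl | hz
          · exact Finset.mem_filter.mpr ⟨hSbF, hSbA.2⟩
          · rw [Finset.mem_singleton] at hz; subst hz; exact hSamem2
        have := Finset.card_le_card this
        rw [Finset.card_pair hSbSa] at this
        omega
      rcases hodd2 with ⟨k, hk⟩
      exact ⟨k - 1, by omega⟩
    · -- generic element
      have hySa : y ∉ Sa := by
        intro hy'
        have : y ∈ Sa.erase x := Finset.mem_erase.mpr ⟨hyx', hy'⟩
        rw [hPa] at this
        rcases Finset.mem_insert.mp this with hv | hv
        · exact hyv1 hv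
        · rw [Finset.mem_singleton] at hv; exact hyv2 hv
      have hySb : y ∉ Sb := by
        intro hy'
        have : y ∈ Sb.erase x := Finset.mem_erase.mpr ⟨hyx', hy'⟩
        rw [hPb] at this
        rcases Finset.mem_insert.mp this with hv | hv
        · exact hyv2 hv
        · rw [Finset.mem_singleton] at hv; exact hyv3 hv
      have hSanm : Sa ∉ F.filter (fun S => y ∈ S) :=
        fun hmem => hySa (Finset.mem_filter.mp hmem).2
      have hSbnm : Sb ∉ (F.filter (fun S => y ∈ S)).erase Sa :=
        fun hmem => hySb (Finset.mem_filter.mp (Finset.mem_of_mem_erase hmem)).2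
      rw [hHfilter, Finset.erase_eq_of_notMem hSbnm, Finset.erase_eq_of_notMem hSanm]
      exact hFodd y (Finset.mem_sup.mpr ⟨U, hUF, hyU⟩)
  · -- Case I : all link degrees are 0 or 2
    push_neg at hcase
    have hl02 : ∀ y, y ≠ x → (A.filter (fun S => y ∈ S)).card = 0 ∨
        (A.filter (fun S => y ∈ S)).card = 2 := by
      intro y hy
      have h2 := hl2 y hy
      have h1 := hcase y hy
      omega
    rcases lt_or_ge B.card 2 with hB1 | hB2
    · -- B = {T0}
      obtain ⟨T0, hT0⟩ := hBne
      have hBcard : B.card = 1 := by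
        have := Finset.card_pos.mpr ⟨T0, hT0⟩; omega
      have hBeq : B = {T0} := by
        obtain ⟨a, ha⟩ := Finset.card_eq_one.mp hBcard
        rw [ha]; rw [ha, Finset.mem_singleton] at hT0; rw [hT0]
      have hpair_sub : ∀ S ∈ A, S.erase x ⊆ T0 := by
        intro S hS y hy
        have hyS : y ∈ S := Finset.mem_of_mem_erase hy
        have hyx : y ≠ x := Finset.ne_of_mem_erase hy
        have hlpos : 0 < (A.filter (fun S => y ∈ S)).card :=
          Finset.card_pos.mpr ⟨S, Finset.mem_filter.mpr ⟨hS, hyS⟩⟩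
        have hl : (A.filter (fun S => y ∈ S)).card = 2 := by
          rcases hl02 y hyx with h0 | h2 <;> omega
        have hFodd_y := hFodd y (Finset.mem_sup.mpr ⟨S, (hAmem S hS).1, hyS⟩)
        have hbne : (B.filter (fun S => y ∈ S)).Nonempty := by
          rw [← Finset.card_pos]
          rcases hFodd_y with ⟨k, hk⟩
          rw [hsplit y, hl] at hk
          omega
        obtain ⟨T, hT⟩ := hbne
        have : T = T0 := by
          have := Finset.mem_of_mem_filter _ hT
          rw [hBeq, Finset.mem_singleton] at this; exact this
        subst this
        exact (Finset.mem_filter.mp hT).2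
      have hinj : A.card ≤ (T0.powersetCard 2).card := by
        apply Finset.card_le_card_of_injOn (fun S => S.erase x)
        · intro S hS
          exact Finset.mem_powersetCard.mpr ⟨hpair_sub S hS, hpaircard S hS⟩
        · intro S hS T hT hEq
          simp only [Finset.mem_coe] at hS hT
          rw [← hins S hS, ← hins T hT]
          exact congrArg (insert x) hEq
      rw [Finset.card_powersetCard, h3 T0 (hBmem T0 hT0).1] at hinj
      norm_num at hinj
      omega
    · -- |B| ≥ 2 : B itself is an odd sunflower
      have hss : B ⊂ F := by
        refine Finset.ssubset_iff_subset_ne.mpr ⟨Finset.filter_subset _ _, fun hEq => ?_⟩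
        obtain ⟨S0, hS0⟩ : A.Nonempty := Finset.card_pos.mp (by omega)
        have : S0 ∈ B := by rw [hEq]; exact (hAmem S0 hS0).1
        exact (hBmem S0 this).2 (hAmem S0 hS0).2
      refine hmin B hss ⟨hB2, fun T hT => hFne T (hBmem T hT).1, fun y hy => ?_⟩
      obtain ⟨T, hTB, hyT⟩ := Finset.mem_sup.mp hy
      simp only [id] at hyT
      have hyx : y ≠ x := fun hEq => (hBmem T hTB).2 (hEq ▸ hyT)
      have hFodd_y := hFodd y (Finset.mem_sup.mpr ⟨T, (hBmem T hTB).1, hyT⟩)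
      have hBfilter : B.filter (fun S => y ∈ S) = B.filter (fun S => y ∈ S) := rfl
      rcases hFodd_y with ⟨k, hk⟩
      rw [hsplit y] at hk
      rcases hl02 y hyx with h0 | h2
      · exact ⟨k, by omega⟩
      · exact ⟨k - 1, by omega⟩
end

section
/- A 1-uniform family of finite sets is a minimal odd-sunflower if and only if it consists of exactly two distinct singletons. A 2-uniform family of finite sets is a minimal odd-sunflower if and only if, up to an injective relabeling of the elements of its ground set, it equals {{1,2},{3,4}} or {{1,2},{1,3},{1,4}}. -/
variable {α : Type*}

/-!
Two disjoint members of a minimal odd-sunflower already form an odd-sunflower, so they are the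
whole family; this settles the 1-uniform case and the 2-uniform case with two disjoint edges.
Otherwise two edges share a vertex `v`, whose degree is odd and hence at least three, and any
three edges through `v` form an odd-sunflower, so the family is such a star of three edges.
Conversely, relabelling injectively on the ground set preserves minimal odd-sunflowers, and the two
model families are minimal by a finite check.
-/

open Finset

section Relabeling

variable {β : Type*} [DecidableEq α] [DecidableEq β] {g : α → β} {F : Finset (Finset α)}

theorem injOn_image_of_injOn_sup (hg : Set.InjOn g ↑(F.sup id)) :
    Set.InjOn (fun S : Finset α => S.image g) ↑F := fun _ hS _ hT h =>
  (image_eq_image_iff_of_injOn hg (le_sup (f := id) hS) (le_sup (f := id) hT)).1 h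

theorem isOddSunflower_image_iff (hg : Set.InjOn g ↑(F.sup id)) :
    IsOddSunflower (F.image fun S => S.image g) ↔ IsOddSunflower F := by
  have hφ := injOn_image_of_injOn_sup hg
  have hsup : (F.image fun S => S.image g).sup id = (F.sup id).image g := by
    ext y
    simp only [mem_sup, mem_image, id]
    grind
  have hdeg : ∀ x ∈ F.sup id,
      #{S' ∈ F.image (fun S => S.image g) | g x ∈ S'} = #{S ∈ F | x ∈ S} := by
    intro x hx
    rw [filter_image, card_image_of_injOn (hφ.mono (coe_subset.2 (filter_subset _ _)))]
    refine congrArg card (filter_congr fun S hS => ?_)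
    simpa only [← mem_coe, coe_image, id] using
      hg.mem_image_iff (coe_subset.2 (le_sup (f := id) hS)) (mem_coe.2 hx)
  unfold IsOddSunflower
  rw [card_image_of_injOn hφ, hsup, forall_mem_image, forall_mem_image]
  simp only [image_nonempty]
  exact and_congr_right' (and_congr_right' (forall₂_congr fun x hx => by rw [hdeg x hx]))

theorem isMinimalOddSunflower_image_iff (hg : Set.InjOn g ↑(F.sup id)) :
    IsMinimalOddSunflower (F.image fun S => S.image g) ↔ IsMinimalOddSunflower F := by
  have hφ := injOn_image_of_injOn_sup hg
  have hsub {H : Finset (Finset α)} (hHF : H ⊆ F) : Set.InjOn g ↑(H.sup id) :=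
    hg.mono (coe_subset.2 (sup_mono hHF))
  refine and_congr (isOddSunflower_image_iff hg)
    ⟨fun hmin H hHF hH => ?_, fun hmin H' hH'F hH' => ?_⟩
  · refine hmin _ (ssubset_def.2 ⟨image_subset_image hHF.subset, fun h => ?_⟩)
      ((isOddSunflower_image_iff (hsub hHF.subset)).2 hH)
    exact (ssubset_def.1 hHF).2 ((image_subset_image_iff_of_injOn hφ subset_rfl hHF.subset).1 h)
  · obtain ⟨H, hHF, rfl⟩ := subset_image_iff.1 hH'F.subset
    exact hmin H (hHF.ssubset_of_ne (by rintro rfl; exact hH'F.ne rfl))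
      ((isOddSunflower_image_iff (hsub hHF)).1 hH')

end Relabeling

section OddSunflower

variable [DecidableEq α] {F H : Finset (Finset α)} {S T : Finset α}

theorem isOddSunflower_pair_of_disjoint (hS : S.Nonempty) (hT : T.Nonempty)
    (hST : Disjoint S T) : IsOddSunflower ({S, T} : Finset (Finset α)) := by
  have hne : S ≠ T := by
    rintro rfl
    exact hS.ne_empty ((disjoint_self_iff_empty S).1 hST)
  refine ⟨(card_pair hne).ge, by simp [hS, hT], fun x hx => ?_⟩
  simp only [sup_insert, sup_singleton, id, sup_eq_union, mem_union] at hx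
  rcases hx with hx | hx
  · have hxT : x ∉ T := disjoint_left.1 hST hx
    simp [filter_insert, filter_singleton, hx, hxT]
  · have hxS : x ∉ S := disjoint_right.1 hST hx
    simp [filter_insert, filter_singleton, hx, hxS]

theorem IsOddSunflower.isMinimalOddSunflower (hF : IsOddSunflower F) (h2 : #F ≤ 2) :
    IsMinimalOddSunflower F :=
  ⟨hF, fun _ hHF hH => by have := card_lt_card hHF; have := hH.1; omega⟩

theorem isMinimalOddSunflower_pair_of_disjoint (hS : S.Nonempty) (hT : T.Nonempty)
    (hST : Disjoint S T) : IsMinimalOddSunflower ({S, T} : Finset (Finset α)) :=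
  (isOddSunflower_pair_of_disjoint hS hT hST).isMinimalOddSunflower card_le_two

theorem isMinimalOddSunflower_iff_forall_powerset :
    IsMinimalOddSunflower F ↔
      IsOddSunflower F ∧ ∀ H ∈ F.powerset, H ≠ F → ¬ IsOddSunflower H := by
  simp only [IsMinimalOddSunflower, mem_powerset, ssubset_iff_subset_ne, and_imp]

theorem IsMinimalOddSunflower.eq_of_subset (hF : IsMinimalOddSunflower F) (hHF : H ⊆ F)
    (hH : IsOddSunflower H) : H = F := by
  by_contra hne
  exact hF.2 H (hHF.ssubset_of_ne hne) hH

theorem IsMinimalOddSunflower.eq_pair_of_disjoint (hF : IsMinimalOddSunflower F) (hS : S ∈ F)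
    (hT : T ∈ F) (hST : Disjoint S T) : F = {S, T} :=
  (hF.eq_of_subset (by simp [insert_subset_iff, hS, hT])
    (isOddSunflower_pair_of_disjoint (hF.1.2.1 S hS) (hF.1.2.1 T hT) hST)).symm

theorem eq_pair_of_card_eq_two {v x : α} (hv : v ∈ S) (hx : x ∈ S) (hvx : v ≠ x)
    (hS : #S = 2) : S = {v, x} :=
  (eq_of_subset_of_card_le (insert_subset_iff.2 ⟨hv, singleton_subset_iff.2 hx⟩)
    (by rw [hS, card_pair hvx])).symm

theorem exists_eq_pair_of_card_eq_two {v : α} (hv : v ∈ S) (hS : #S = 2) :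
    ∃ p, p ≠ v ∧ S = {v, p} := by
  obtain ⟨p, hp⟩ := card_eq_one.1 (by rw [card_erase_of_mem hv, hS] : #(S.erase v) = 1)
  exact ⟨p, (mem_erase.1 (hp ▸ mem_singleton_self p)).1, by rw [← insert_erase hv, hp]⟩

theorem isOddSunflower_star {v : α} (h2 : 2 ≤ #F) (hodd : Odd #F)
    (hF : ∀ S ∈ F, v ∈ S ∧ #S = 2) : IsOddSunflower F := by
  refine ⟨h2, fun S hS => card_pos.1 (by rw [(hF S hS).2]; norm_num), fun x hx => ?_⟩
  by_cases hxv : x = v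
  · subst hxv
    rwa [filter_true_of_mem fun S hS => (hF S hS).1]
  · have hle : #{S ∈ F | x ∈ S} ≤ 1 := card_le_one.2 fun S hS T hT => by
      rw [mem_filter] at hS hT
      rw [eq_pair_of_card_eq_two (hF S hS.1).1 hS.2 (Ne.symm hxv) (hF S hS.1).2,
        eq_pair_of_card_eq_two (hF T hT.1).1 hT.2 (Ne.symm hxv) (hF T hT.1).2]
    obtain ⟨S, hS, hxS⟩ := mem_sup.1 hx
    have hpos : 0 < #{S ∈ F | x ∈ S} := card_pos.2 ⟨S, mem_filter.2 ⟨hS, hxS⟩⟩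
    rw [show #{S ∈ F | x ∈ S} = 1 by omega]
    exact odd_one

theorem IsMinimalOddSunflower.exists_star (hF : IsMinimalOddSunflower F)
    (h2 : ∀ S ∈ F, #S = 2) {v : α} (hS : S ∈ F) (hT : T ∈ F) (hST : S ≠ T) (hvS : v ∈ S)
    (hvT : v ∈ T) : ∃ p q r, [v, p, q, r].Nodup ∧ F = {{v, p}, {v, q}, {v, r}} := by
  have hodd : Odd #{U ∈ F | v ∈ U} := hF.1.2.2 v (mem_sup.2 ⟨S, hS, hvS⟩)
  have hpair : #{S, T} ≤ #{U ∈ F | v ∈ U} :=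
    card_le_card (by simp [insert_subset_iff, hS, hT, hvS, hvT])
  rw [card_pair hST] at hpair
  obtain ⟨H, hHv, hH3⟩ := exists_subset_card_eq (show 3 ≤ #{U ∈ F | v ∈ U} by
    obtain ⟨k, hk⟩ := hodd; omega)
  have hH : ∀ U ∈ H, v ∈ U ∧ #U = 2 := fun U hU =>
    ⟨(mem_filter.1 (hHv hU)).2, h2 U (mem_filter.1 (hHv hU)).1⟩
  have hHF : H = F := hF.eq_of_subset (hHv.trans (filter_subset _ _))
    (isOddSunflower_star (by omega) (by rw [hH3]; decide) hH)
  obtain ⟨A, B, C, hAB, hAC, hBC, rfl⟩ := card_eq_three.1 hH3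
  obtain ⟨p, hpv, rfl⟩ := exists_eq_pair_of_card_eq_two (hH A (by simp)).1 (hH A (by simp)).2
  obtain ⟨q, hqv, rfl⟩ := exists_eq_pair_of_card_eq_two (hH B (by simp)).1 (hH B (by simp)).2
  obtain ⟨r, hrv, rfl⟩ := exists_eq_pair_of_card_eq_two (hH C (by simp)).1 (hH C (by simp)).2
  refine ⟨p, q, r, ?_, hHF.symm⟩
  have hpq : p ≠ q := by rintro rfl; exact hAB rfl
  have hpr : p ≠ r := by rintro rfl; exact hAC rfl
  have hqr : q ≠ r := by rintro rfl; exact hBC rfl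
  simp [hpv.symm, hqv.symm, hrv.symm, hpq, hpr, hqr]

theorem IsMinimalOddSunflower.exists_nodup_of_card_eq_two (hF : IsMinimalOddSunflower F)
    (h2 : ∀ S ∈ F, #S = 2) : ∃ a b c d : α, [a, b, c, d].Nodup ∧
      (F = {{a, b}, {c, d}} ∨ F = {{a, b}, {a, c}, {a, d}}) := by
  obtain ⟨S, hS, T, hT, hST⟩ := one_lt_card.1 hF.1.1
  by_cases hd : Disjoint S T
  · have hF' := hF.eq_pair_of_disjoint hS hT hd
    obtain ⟨a, b, hab, rfl⟩ := card_eq_two.1 (h2 S hS)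
    obtain ⟨c, d, hcd, rfl⟩ := card_eq_two.1 (h2 T hT)
    refine ⟨a, b, c, d, ?_, Or.inl hF'⟩
    simp only [disjoint_insert_left, disjoint_singleton_left, mem_insert, mem_singleton,
      not_or] at hd
    simp [hab, hcd, hd]
  · obtain ⟨v, hvS, hvT⟩ := not_disjoint_iff.1 hd
    obtain ⟨p, q, r, hnd, hF'⟩ := hF.exists_star h2 hS hT hST hvS hvT
    exact ⟨v, p, q, r, hnd, Or.inr hF'⟩

end OddSunflower

section Classification

variable [DecidableEq α] {F : Finset (Finset α)}

theorem exists_injOn_eq_of_nodup {a b c d : α} (h : [a, b, c, d].Nodup) :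
    ∃ f : α → ℕ, Set.InjOn f {a, b, c, d} ∧ f a = 1 ∧ f b = 2 ∧ f c = 3 ∧ f d = 4 := by
  refine ⟨fun x => [a, b, c, d].idxOf x + 1, fun x hx y _ hxy => ?_, ?_⟩
  · exact (List.idxOf_inj (by simpa using hx)).1 (Nat.add_right_cancel hxy)
  · simp only [List.nodup_cons, List.mem_cons, List.not_mem_nil, or_false, not_or] at h
    obtain ⟨⟨hab, hac, had⟩, ⟨hbc, hbd⟩, hcd, -⟩ := h
    simp [hab, hac, had, hbc, hbd, hcd]

theorem isMinimalOddSunflower_iff_of_card_eq_one (h1 : ∀ S ∈ F, #S = 1) :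
    IsMinimalOddSunflower F ↔ ∃ x y : α, x ≠ y ∧ F = {{x}, {y}} := by
  constructor
  · intro hF
    obtain ⟨S, hS, T, hT, hST⟩ := one_lt_card.1 hF.1.1
    obtain ⟨x, rfl⟩ := card_eq_one.1 (h1 S hS)
    obtain ⟨y, rfl⟩ := card_eq_one.1 (h1 T hT)
    have hxy : x ≠ y := by rintro rfl; exact hST rfl
    exact ⟨x, y, hxy, hF.eq_pair_of_disjoint hS hT (disjoint_singleton.2 hxy)⟩
  · rintro ⟨x, y, hxy, rfl⟩
    exact isMinimalOddSunflower_pair_of_disjoint (singleton_nonempty x) (singleton_nonempty y)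
      (disjoint_singleton.2 hxy)

theorem isMinimalOddSunflower_iff_of_card_eq_two (h2 : ∀ S ∈ F, #S = 2) :
    IsMinimalOddSunflower F ↔ ∃ f : α → ℕ, Set.InjOn f ↑(F.sup id) ∧
      (F.image (fun S => S.image f) = {{1, 2}, {3, 4}} ∨
        F.image (fun S => S.image f) = {{1, 2}, {1, 3}, {1, 4}}) := by
  constructor
  · intro hF
    obtain ⟨a, b, c, d, hnd, hF'⟩ := hF.exists_nodup_of_card_eq_two h2
    obtain ⟨f, hf, ha, hb, hc, hd⟩ := exists_injOn_eq_of_nodup hnd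
    refine ⟨f, hf.mono ?_, ?_⟩
    · rcases hF' with rfl | rfl <;> intro x <;> simp <;> tauto
    · rcases hF' with rfl | rfl <;> simp [ha, hb, hc, hd]
  · rintro ⟨f, hf, himg | himg⟩ <;>
    · rw [← isMinimalOddSunflower_image_iff hf, himg, isMinimalOddSunflower_iff_forall_powerset]
      unfold IsOddSunflower
      decide

end Classification

/-- Classification of 1-uniform and 2-uniform minimal odd-sunflowers. -/
theorem oneMOS_twoMOS_classification {α : Type*} [DecidableEq α] :
    (∀ F : Finset (Finset α), (∀ S ∈ F, S.card = 1) →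
      (IsMinimalOddSunflower F ↔ ∃ x y : α, x ≠ y ∧ F = {{x}, {y}})) ∧
    (∀ F : Finset (Finset α), (∀ S ∈ F, S.card = 2) →
      (IsMinimalOddSunflower F ↔
        ∃ f : α → ℕ, Set.InjOn f ↑(F.sup id) ∧
          (F.image (fun S => S.image f) =
              ({{1, 2}, {3, 4}} : Finset (Finset ℕ)) ∨
           F.image (fun S => S.image f) =
              ({{1, 2}, {1, 3}, {1, 4}} : Finset (Finset ℕ))))) :=
  ⟨fun _ => isMinimalOddSunflower_iff_of_card_eq_one,
    fun _ => isMinimalOddSunflower_iff_of_card_eq_two⟩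
end

section
/- For every k ≥ 1 there exists a k-uniform odd-sunflower-free family of finite sets whose union has at least 2^k − 1 elements; such a family is given by the k-uniform family whose members are the vertex sets of the root-to-leaf paths of a rooted complete binary tree of depth k. -/
variable {α : Type*}

/-- The `k`-uniform family of root-to-leaf paths (each path recorded as the set of binary
strings that are the prefixes of a leaf) of the rooted complete binary tree of depth `k`. -/
def binTreePaths (k : ℕ) : Finset (Finset (List Bool)) :=
  Finset.image
    (fun f : Fin (k - 1) → Bool =>
      (Finset.range k).image (fun i => (List.ofFn f).take i))
    Finset.univ


private lemma takeSet_mem {k : ℕ} (hk : 1 ≤ k) (l : List Bool) (hl : l.length = k - 1)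
    (x : List Bool) :
    x ∈ (Finset.range k).image (fun i => l.take i) ↔ x <+: l := by
  simp only [Finset.mem_image, Finset.mem_range]
  constructor
  · rintro ⟨i, hi, rfl⟩; exact l.take_prefix i
  · intro h
    have hx := h.length_le
    exact ⟨x.length, by omega, (List.prefix_iff_eq_take.mp h).symm⟩

private lemma takeSet_card {k : ℕ} (hk : 1 ≤ k) (l : List Bool) (hl : l.length = k - 1) :
    ((Finset.range k).image (fun i => l.take i)).card = k := by
  rw [Finset.card_image_of_injOn, Finset.card_range]
  intro a ha b hb hab
  have h2 : (l.take a).length = (l.take b).length := congrArg List.length hab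
  simp only [List.length_take, hl, Finset.mem_coe, Finset.mem_range] at h2 ha hb
  omega

private lemma mem_binTreePaths' {k : ℕ} {S : Finset (List Bool)} :
    S ∈ binTreePaths k ↔ ∃ l : List Bool, l.length = k - 1 ∧
      S = (Finset.range k).image (fun i => l.take i) := by
  simp only [binTreePaths, Finset.mem_image, Finset.mem_univ, true_and]
  constructor
  · rintro ⟨f, rfl⟩; exact ⟨List.ofFn f, by simp, rfl⟩
  · rintro ⟨l, hl, rfl⟩
    refine ⟨fun i => l[(i : ℕ)]'(by omega), ?_⟩
    have : List.ofFn (fun i : Fin (k - 1) => l[(i : ℕ)]'(by omega)) = l := by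
      apply List.ext_getElem (by simp [hl])
      intro i h1 h2
      simp
    rw [this]

private lemma binTreePaths_free {k : ℕ} (hk : 1 ≤ k) : OddSunflowerFree (binTreePaths k) := by
  rintro H hH ⟨hcard, -, hoddx⟩
  have hmem : ∀ S ∈ H, ∃ l : List Bool, l.length = k - 1 ∧ ∀ x, x ∈ S ↔ x <+: l := by
    intro S hS
    obtain ⟨l, hl, rfl⟩ := mem_binTreePaths'.mp (hH hS)
    exact ⟨l, hl, fun x => takeSet_mem hk l hl x⟩
  have hnil : ∀ S ∈ H, ([] : List Bool) ∈ S := by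
    intro S hS
    obtain ⟨l, hl, hiff⟩ := hmem S hS
    exact (hiff []).mpr List.nil_prefix
  have hHne : H.Nonempty := Finset.card_pos.mp (by omega)
  have hoddH : Odd H.card := by
    obtain ⟨S, hS⟩ := hHne
    have hx : ([] : List Bool) ∈ H.sup id := Finset.mem_sup.mpr ⟨S, hS, hnil S hS⟩
    have := hoddx [] hx
    rwa [Finset.filter_true_of_mem hnil] at this
  -- push a common prefix down the tree
  have main : ∀ j, j ≤ k - 1 → ∃ p : List Bool, p.length = j ∧ ∀ S ∈ H, p ∈ S := by
    intro j
    induction j with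
    | zero => exact fun _ => ⟨[], rfl, hnil⟩
    | succ j ih =>
      intro hj
      obtain ⟨p, hp, hpall⟩ := ih (by omega)
      have hsplit : ∀ S ∈ H, (p ++ [false] ∈ S ↔ ¬ p ++ [true] ∈ S) := by
        intro S hS
        obtain ⟨l, hl, hiff⟩ := hmem S hS
        have hpl : p <+: l := (hiff p).mp (hpall S hS)
        have hlen : p.length < l.length := by omega
        have hpt : p = l.take p.length := List.prefix_iff_eq_take.mp hpl
        have hb : p ++ [l[p.length]'hlen] <+: l := by
          have h1 : l.take (p.length + 1) = p ++ [l[p.length]'hlen] := by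
            rw [List.take_succ, ← hpt]
            simp [List.getElem?_eq_getElem hlen]
          rw [← h1]; exact l.take_prefix _
        have huniq : ∀ c : Bool, p ++ [c] <+: l → c = l[p.length]'hlen := by
          intro c hc
          have := List.prefix_iff_eq_take.mp hc
          have h2 := List.prefix_iff_eq_take.mp hb
          simp only [List.length_append, List.length_singleton] at this h2
          have h3 : p ++ [c] = p ++ [l[p.length]'hlen] := by rw [this, h2]
          simpa using h3
        rw [hiff, hiff]
        rcases hb' : l[p.length]'hlen with _ | _
        · rw [hb'] at hb huniq
          simp only [iff_true_intro hb, true_iff]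
          intro hcon
          exact Bool.noConfusion (huniq true hcon)
        · rw [hb'] at hb huniq
          constructor
          · intro hcon _; exact Bool.noConfusion (huniq false hcon)
          · intro hcon; exact (hcon hb).elim
      have hfe : H.filter (fun S => ¬ p ++ [false] ∈ S) = H.filter (fun S => p ++ [true] ∈ S) :=
        Finset.filter_congr (fun S hS => by
          have := hsplit S hS
          constructor
          · intro h; by_contra hc; exact h (this.mpr hc)
          · intro h hc; exact (this.mp hc) h)
      have hpartition :
          (H.filter (fun S => p ++ [false] ∈ S)).card
            + (H.filter (fun S => p ++ [true] ∈ S)).card = H.card := by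
        rw [← hfe]
        exact Finset.card_filter_add_card_filter_not _
      -- one of the two children has count zero
      by_cases h0 : (H.filter (fun S => p ++ [false] ∈ S)).card = 0
      · refine ⟨p ++ [true], by simp [hp], fun S hS => ?_⟩
        by_contra hc
        have : S ∈ H.filter (fun S => p ++ [false] ∈ S) :=
          Finset.mem_filter.mpr ⟨hS, (hsplit S hS).mpr hc⟩
        rw [Finset.card_eq_zero] at h0
        simp [h0] at this
      by_cases h1 : (H.filter (fun S => p ++ [true] ∈ S)).card = 0
      · refine ⟨p ++ [false], by simp [hp], fun S hS => ?_⟩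
        by_contra hc
        have hT : p ++ [true] ∈ S := by
          by_contra hc2; exact hc ((hsplit S hS).mpr hc2)
        have : S ∈ H.filter (fun S => p ++ [true] ∈ S) :=
          Finset.mem_filter.mpr ⟨hS, hT⟩
        rw [Finset.card_eq_zero] at h1
        simp [h1] at this
      · exfalso
        have hodd0 : Odd (H.filter (fun S => p ++ [false] ∈ S)).card := by
          obtain ⟨S, hS⟩ := Finset.card_pos.mp (Nat.pos_of_ne_zero h0)
          have hS' := Finset.mem_filter.mp hS
          exact hoddx _ (Finset.mem_sup.mpr ⟨S, hS'.1, hS'.2⟩)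
        have hodd1 : Odd (H.filter (fun S => p ++ [true] ∈ S)).card := by
          obtain ⟨S, hS⟩ := Finset.card_pos.mp (Nat.pos_of_ne_zero h1)
          have hS' := Finset.mem_filter.mp hS
          exact hoddx _ (Finset.mem_sup.mpr ⟨S, hS'.1, hS'.2⟩)
        obtain ⟨a, ha⟩ := hodd0
        obtain ⟨b, hb⟩ := hodd1
        obtain ⟨c, hc⟩ := hoddH
        omega
  -- at depth k-1 all members are equal
  obtain ⟨p, hp, hpall⟩ := main (k - 1) le_rfl
  obtain ⟨S, hS⟩ := hHne
  have hall : ∀ T ∈ H, T = S := by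
    have key : ∀ T ∈ H, ∀ x, x ∈ T ↔ x <+: p := by
      intro T hT
      obtain ⟨l, hl, hiff⟩ := hmem T hT
      have h1 : p <+: l := (hiff p).mp (hpall T hT)
      have h2 : p = l := by
        have := List.prefix_iff_eq_take.mp h1
        rw [hp, ← hl, List.take_length] at this
        exact this
      intro x; rw [hiff, h2]
    intro T hT
    ext x
    rw [key T hT x, key S hS x]
  have : H.card ≤ 1 := Finset.card_le_one.mpr (fun a ha b hb => by rw [hall a ha, hall b hb])
  omega

private lemma sum_two_pow (n : ℕ) : ∑ i ∈ Finset.range n, 2 ^ i = 2 ^ n - 1 := by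
  induction n with
  | zero => simp
  | succ n ih =>
    rw [Finset.sum_range_succ, ih, pow_succ]
    have : 1 ≤ 2 ^ n := Nat.one_le_two_pow
    omega


/-- For every `k ≥ 1`, the family of root-to-leaf paths of a rooted complete binary tree
of depth `k` is a `k`-uniform odd-sunflower-free family whose union has at least
`2^k - 1` elements. -/
theorem binTreePaths_oddSunflowerFree (k : ℕ) (hk : 1 ≤ k) :
    (∀ S ∈ binTreePaths k, S.Nonempty) ∧
    (∀ S ∈ binTreePaths k, S.card = k) ∧
    OddSunflowerFree (binTreePaths k) ∧
    2 ^ k - 1 ≤ ((binTreePaths k).sup id).card := by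
  refine ⟨?_, ?_, binTreePaths_free hk, ?_⟩
  · intro S hS
    obtain ⟨l, hl, rfl⟩ := mem_binTreePaths'.mp hS
    exact ⟨[], (takeSet_mem hk l hl []).mpr List.nil_prefix⟩
  · intro S hS
    obtain ⟨l, hl, rfl⟩ := mem_binTreePaths'.mp hS
    exact takeSet_card hk l hl
  · set U : Finset (List Bool) :=
      (Finset.range k).biUnion
        (fun j => (Finset.univ : Finset (Fin j → Bool)).image List.ofFn) with hU
    have hsub : U ⊆ (binTreePaths k).sup id := by
      intro x hx
      simp only [hU, Finset.mem_biUnion, Finset.mem_range, Finset.mem_image,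
        Finset.mem_univ, true_and] at hx
      obtain ⟨j, hj, g, rfl⟩ := hx
      have hlen : (List.ofFn g).length ≤ k - 1 := by simp; omega
      -- extend to a leaf
      set l : List Bool := List.ofFn g ++ List.replicate (k - 1 - j) false with hldef
      have hll : l.length = k - 1 := by simp [hldef]; omega
      have hpre : List.ofFn g <+: l := ⟨_, rfl⟩
      refine Finset.mem_sup.mpr ⟨(Finset.range k).image (fun i => l.take i),
        mem_binTreePaths'.mpr ⟨l, hll, rfl⟩, ?_⟩
      exact (takeSet_mem hk l hll _).mpr hpre
    refine le_trans (le_of_eq ?_) (Finset.card_le_card hsub)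
    rw [hU, Finset.card_biUnion, ← sum_two_pow]
    · apply Finset.sum_congr rfl
      intro j hj
      rw [Finset.card_image_of_injective _ List.ofFn_injective]
      simp
    · intro i hi j hj hij
      simp only [Finset.disjoint_left, Finset.mem_image, Finset.mem_univ, true_and]
      rintro x ⟨g, rfl⟩ ⟨g', hg'⟩
      apply hij
      have := congrArg List.length hg'
      simpa using this.symm
end
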